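/- arXiv:2501.10327 — 5 statements merged into one kernel-verified Lean document; each statement's English description precedes it below -/
import Mathlib

section
/- Let F be a field, n a positive integer, and J an ideal of the formal power series ring F[[X_1,...,X_n]] that is strictly contained in the maximal ideal (X_1,...,X_n). Then F[[X_1,...,X_n]]/J admits a surjective F-algebra homomorphism onto F[T]/(T^2). -/
/-!
Let `m` be the kernel of the constant coefficient. Since `F[[X_1, ..., X_n]]` is a noetherian
local ring, Nakayama's lemma turns `J < m` into `m ⊄ J + m²`; pick `g ∈ m` outside `J + m²`.
A linear form `L` vanishing on `J + m²` and on the constants, with `L g = 1`, is a point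
derivation at the constant coefficient `φ`, so `a ↦ φ a + L a • ε` is an algebra map onto
`F[ε]` which kills `J`.
-/

open MvPowerSeries

section DualNumber

variable {F A : Type*} [Field F] [CommRing A] [Algebra F A]

theorem leibniz_of_map_mul_eq_zero (φ : A →ₐ[F] F) (L : A →ₗ[F] F) (h1 : L 1 = 0)
    (hsq : ∀ a ∈ RingHom.ker φ, ∀ b ∈ RingHom.ker φ, L (a * b) = 0) (a b : A) :
    L (a * b) = φ a * L b + φ b * L a := by
  have hker : ∀ x : A, x - algebraMap F A (φ x) ∈ RingHom.ker φ := fun x => by simp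
  have key : a * b = (a - algebraMap F A (φ a)) * (b - algebraMap F A (φ b))
      + φ a • b + φ b • a - (φ a * φ b) • 1 := by
    simp only [Algebra.smul_def, map_mul]
    ring
  rw [key, map_sub, map_add, map_add, hsq _ (hker a) _ (hker b)]
  simp [h1, mul_comm]

variable (φ : A →ₐ[F] F) (L : A →ₗ[F] F) (hL : ∀ a b, L (a * b) = φ a * L b + φ b * L a)

noncomputable def AlgHom.toDualNumberOfLeibniz : A →ₐ[F] DualNumber F :=
  AlgHom.ofLinearMap
    ((TrivSqZeroExt.inlAlgHom F F F).toLinearMap ∘ₗ φ.toLinearMap + TrivSqZeroExt.inrHom F F ∘ₗ L)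
    (by
      have h1 : L 1 = 0 := by simpa using hL 1 1
      ext <;> simp [h1])
    (fun a b => by
      ext
      · simp
      · simp [hL, mul_comm])

@[simp]
theorem AlgHom.fst_toDualNumberOfLeibniz (a : A) :
    (φ.toDualNumberOfLeibniz L hL a).fst = φ a := by
  simp [AlgHom.toDualNumberOfLeibniz]

@[simp]
theorem AlgHom.snd_toDualNumberOfLeibniz (a : A) :
    (φ.toDualNumberOfLeibniz L hL a).snd = L a := by
  simp [AlgHom.toDualNumberOfLeibniz]

theorem AlgHom.toDualNumberOfLeibniz_surjective {g : A} (hφg : φ g = 0) (hLg : L g = 1) :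
    Function.Surjective (φ.toDualNumberOfLeibniz L hL) := fun x => by
  refine ⟨algebraMap F A x.fst + x.snd • g, ?_⟩
  ext <;> simp [hφg, hLg, Algebra.algebraMap_eq_smul_one]

end DualNumber

theorem Ideal.not_le_sup_mul_self_of_lt {R : Type*} [CommRing R] {m J : Ideal R} (hfg : m.FG)
    (hm : m ≤ jacobson ⊥) (hJ : J < m) : ¬m ≤ J ⊔ m * m := fun h =>
  hJ.not_ge (Submodule.le_of_le_smul_of_le_jacobson_bot hfg hm h)

theorem Submodule.exists_dual_eq_one_of_notMem {K V : Type*} [Field K] [AddCommGroup V]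
    [Module K V] {p : Submodule K V} {v : V} (hv : v ∉ p) :
    ∃ f : Module.Dual K V, f v = 1 ∧ p ≤ LinearMap.ker f := by
  obtain ⟨f, hf⟩ := Module.Projective.exists_dual_eq_one K (by simpa using hv : p.mkQ v ≠ 0)
  exact ⟨f ∘ₗ p.mkQ, hf, fun x hx => by simp [(Submodule.Quotient.mk_eq_zero p).mpr hx]⟩

theorem exists_surjective_quotient_algHom_dualNumber {F A : Type*} [Field F] [CommRing A]
    [Algebra F A] [IsLocalRing A] [IsNoetherianRing A] (φ : A →ₐ[F] F) {J : Ideal A}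
    (hJ : J < RingHom.ker φ) :
    ∃ f : (A ⧸ J) →ₐ[F] DualNumber F, Function.Surjective f := by
  set m := RingHom.ker φ
  have hm : m ≤ Ideal.jacobson ⊥ :=
    (IsLocalRing.le_maximalIdeal (RingHom.ker_ne_top φ)).trans
      (IsLocalRing.maximalIdeal_le_jacobson ⊥)
  obtain ⟨g, hgm, hg⟩ := SetLike.not_le_iff_exists.mp
    (Ideal.not_le_sup_mul_self_of_lt (IsNoetherian.noetherian m) hm hJ)
  obtain ⟨L₀, hL₀g, hL₀⟩ :=
    Submodule.exists_dual_eq_one_of_notMem (p := (J ⊔ m * m).restrictScalars F) hg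
  -- subtracting the constant term forces `L 1 = 0` without changing `L₀` on `m`
  set L : A →ₗ[F] F := L₀ ∘ₗ (LinearMap.id - Algebra.linearMap F A ∘ₗ φ.toLinearMap)
  have hLm : ∀ a ∈ m, L a = L₀ a := fun a ha => by simp [L, RingHom.mem_ker.mp ha]
  have hLeib := leibniz_of_map_mul_eq_zero φ L (by simp [L]) fun a ha b hb => by
    rw [hLm _ (Ideal.mul_mem_left _ _ hb)]
    exact hL₀ (Ideal.mem_sup_right (Ideal.mul_mem_mul ha hb))
  refine ⟨Ideal.Quotient.liftₐ J (φ.toDualNumberOfLeibniz L hLeib) fun a ha => ?_, ?_⟩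
  · ext
    · simpa using RingHom.mem_ker.mp (hJ.le ha)
    · simpa [hLm a (hJ.le ha)] using hL₀ (Ideal.mem_sup_left ha)
  · exact Function.Surjective.of_comp (g := Ideal.Quotient.mk J)
      (φ.toDualNumberOfLeibniz_surjective L hLeib hgm (by rwa [hLm g hgm]))

theorem stmt1_general (F : Type*) [Field F] (n : ℕ)
    (J : Ideal (MvPowerSeries (Fin n) F))
    (hJ : J < RingHom.ker (MvPowerSeries.constantCoeff : MvPowerSeries (Fin n) F →+* F)) :
    ∃ f : (MvPowerSeries (Fin n) F ⧸ J) →ₐ[F] DualNumber F, Function.Surjective f :=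
  exists_surjective_quotient_algHom_dualNumber
    { (constantCoeff : MvPowerSeries (Fin n) F →+* F) with
      commutes' := fun c => by simp [MvPowerSeries.algebraMap_apply] } hJ

/-- If `J` is an ideal of `F[[X_1, ..., X_n]]` strictly contained in the maximal ideal
`(X_1, ..., X_n)` (the ideal of power series with zero constant term), then
`F[[X_1, ..., X_n]]/J` admits a surjective `F`-algebra homomorphism onto the dual
numbers `F[T]/(T^2)`. -/
theorem stmt1 (F : Type*) [Field F] (n : ℕ) (hn : 0 < n)
    (J : Ideal (MvPowerSeries (Fin n) F))
    (hJ : J < RingHom.ker (MvPowerSeries.constantCoeff : MvPowerSeries (Fin n) F →+* F)) :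
    ∃ f : (MvPowerSeries (Fin n) F ⧸ J) →ₐ[F] DualNumber F, Function.Surjective f :=
  stmt1_general F n J hJ
end

section
/- Let O be a complete discrete valuation ring with uniformizer λ, A = ∏_{g ∈ N} O a finite product of copies of O, T ⊆ A a local complete O-subalgebra of full O-rank, and J ⊆ T an ideal of finite index. For each g let T_g and J_g denote the images of T and J under the projection to the g-th factor, so T_g = O and J_g = λ^{m_g} O for positive integers m_g. If J is a principal ideal of T, then #(T/J) = ∏_{g ∈ N} #(T_g / J_g) = ∏_g #(O/λ^{m_g}). -/
/-!
Write `J = tT` and `x = t ∈ A`. Each coordinate `x_g` generates `J_g = (ϖ^{m_g}) ≠ 0`, so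
multiplication by `x` is injective on `A`, and `#(A/xA) = ∏_g #(O/x_g O)`. The full-rank
hypothesis makes `[A : T]` finite, and injectivity gives `[xA : xT] = [A : T]`; computing
`[A : xT]` through `T` and through `xA` then yields `#(T/xT) = #(A/xA)`.
-/

theorem AddSubgroup.relIndex_map_self_eq_index_range {G : Type*} [AddGroup G] {e : G →+ G}
    (he : Function.Injective e) {K : AddSubgroup G} (hK : K.index ≠ 0) (hKe : K.map e ≤ K) :
    (K.map e).relIndex K = e.range.index := by
  have h := AddSubgroup.relIndex_mul_index hKe
  rw [AddSubgroup.index_map_of_injective K he, mul_comm K.index] at h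
  exact Nat.eq_of_mul_eq_mul_right (Nat.pos_of_ne_zero hK) h

theorem Ideal.card_quotient_span_singleton {R : Type*} [CommRing R] (r : R) :
    Nat.card (R ⧸ Ideal.span {r}) = (AddMonoidHom.mulLeft r).range.index := by
  have : (Ideal.span {r}).toAddSubgroup = (AddMonoidHom.mulLeft r).range := by
    ext y; simp [Ideal.mem_span_singleton', mul_comm]
  rw [← this]; rfl

theorem Pi.card_quotient_span_singleton {ι R : Type*} [Fintype ι] [CommRing R] (x : ι → R) :
    Nat.card ((ι → R) ⧸ Ideal.span {x}) = ∏ g, Nat.card (R ⧸ Ideal.span {x g}) := by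
  have : (AddMonoidHom.mulLeft x).range =
      AddSubgroup.pi Set.univ fun g => (AddMonoidHom.mulLeft (x g)).range := by
    ext y
    simp only [AddMonoidHom.mem_range, AddMonoidHom.coe_mulLeft, AddSubgroup.mem_pi,
      Set.mem_univ, forall_const]
    exact ⟨by rintro ⟨a, rfl⟩ g; exact ⟨a g, rfl⟩,
      fun h => ⟨fun g => (h g).choose, funext fun g => (h g).choose_spec⟩⟩
  simp only [Ideal.card_quotient_span_singleton, this, AddSubgroup.index_pi]

theorem RingHom.card_quotient_span_singleton_map {S A : Type*} [CommRing S] [CommRing A]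
    (φ : S →+* A) (hφ : Function.Injective φ) (hfin : φ.toAddMonoidHom.range.index ≠ 0)
    {s : S} (hs : IsLeftRegular (φ s)) :
    Nat.card (S ⧸ Ideal.span {s}) = Nat.card (A ⧸ Ideal.span {φ s}) := by
  have hcomm : φ.toAddMonoidHom.comp (AddMonoidHom.mulLeft s) =
      (AddMonoidHom.mulLeft (φ s)).comp φ.toAddMonoidHom := by
    ext y; simp
  have hrange : (AddMonoidHom.mulLeft s).range.map φ.toAddMonoidHom =
      φ.toAddMonoidHom.range.map (AddMonoidHom.mulLeft (φ s)) := by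
    rw [AddMonoidHom.map_range, AddMonoidHom.map_range, hcomm]
  rw [Ideal.card_quotient_span_singleton, Ideal.card_quotient_span_singleton,
    ← AddSubgroup.relIndex_top_right,
    ← AddSubgroup.relIndex_map_map_of_injective (f := φ.toAddMonoidHom) _ _ hφ,
    ← AddMonoidHom.range_eq_map, hrange]
  exact AddSubgroup.relIndex_map_self_eq_index_range hs hfin
    (by rw [← hrange, AddMonoidHom.range_eq_map φ.toAddMonoidHom]
        exact AddSubgroup.map_mono le_top)

theorem Submodule.exists_pow_smul_top_le {R M : Type*} [CommRing R] [AddCommGroup M] [Module R M]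
    [Module.Finite R M] {N : Submodule R M} {r : R} (h : ∀ x, ∃ n : ℕ, r ^ n • x ∈ N) :
    ∃ n : ℕ, Ideal.span {r} ^ n • (⊤ : Submodule R M) ≤ N := by
  classical
  obtain ⟨s, hs⟩ := Module.Finite.fg_top (R := R) (M := M)
  choose n hn using h
  refine ⟨s.sup n, ?_⟩
  rw [Ideal.span_singleton_pow, Submodule.ideal_span_singleton_smul, ← hs,
    Submodule.smul_span, Submodule.span_le]
  rintro _ ⟨x, hx, rfl⟩
  change r ^ s.sup n • x ∈ N
  rw [← Nat.sub_add_cancel (Finset.le_sup hx), pow_add, mul_smul]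
  exact N.smul_mem _ (hn x)

theorem Submodule.finite_quotient_of_forall_pow_smul_mem {R M : Type*} [CommRing R]
    [AddCommGroup M] [Module R M] [Module.Finite R M] {r : R} [Finite (R ⧸ Ideal.span {r})]
    {N : Submodule R M} (h : ∀ x, ∃ n : ℕ, r ^ n • x ∈ N) : Finite (M ⧸ N) := by
  obtain ⟨n, hn⟩ := Submodule.exists_pow_smul_top_le h
  have := Ideal.finite_quotient_pow (Submodule.fg_span_singleton r) n
  have := Submodule.finite_quotient_smul (Ideal.span {r} ^ n)
    (Module.Finite.fg_top (R := R) (M := M))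
  exact Finite.of_surjective _ (Submodule.factor_surjective hn)

theorem stmt7_general (O : Type*) [CommRing O] [IsDomain O]
    (ϖ : O) (hϖ : Irreducible ϖ) [Finite (O ⧸ Ideal.span {ϖ})]
    (ι : Type*) [Fintype ι]
    (T : Subalgebra O (ι → O))
    (hfull : ∀ x : ι → O, ∃ n : ℕ, ϖ ^ n • x ∈ T)
    (J : Ideal T)
    (m : ι → ℕ)
    (hJg : ∀ g : ι,
      Ideal.map ((Pi.evalRingHom (fun _ : ι => O) g).comp T.val.toRingHom) J
        = Ideal.span {ϖ ^ m g})
    (hprinc : ∃ t : T, J = Ideal.span {t}) :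
    Nat.card (T ⧸ J) = ∏ g : ι, Nat.card (O ⧸ Ideal.span {ϖ ^ m g}) := by
  obtain ⟨t, rfl⟩ := hprinc
  set φ : T →+* (ι → O) := T.val.toRingHom
  have hspan (g : ι) : Ideal.span {φ t g} = Ideal.span {ϖ ^ m g} := by
    rw [← hJg g, Ideal.map_span, Set.image_singleton]; rfl
  have hregular : IsLeftRegular (φ t) := Pi.isLeftRegular_iff.mpr fun g =>
    IsLeftCancelMulZero.mul_left_cancel_of_ne_zero <|
      (Ideal.span_singleton_eq_span_singleton.mp (hspan g)).ne_zero_iff.mpr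
        (pow_ne_zero _ hϖ.ne_zero)
  have hindex : φ.toAddMonoidHom.range.index ≠ 0 := by
    have : Finite ((ι → O) ⧸ (Subalgebra.toSubmodule T).toAddSubgroup) :=
      Submodule.finite_quotient_of_forall_pow_smul_mem hfull
    have hrange : φ.toAddMonoidHom.range = (Subalgebra.toSubmodule T).toAddSubgroup := by
      ext y; simp [φ]
    rw [hrange]
    exact AddSubgroup.index_ne_zero_of_finite
  calc Nat.card (T ⧸ Ideal.span {t})
      = Nat.card ((ι → O) ⧸ Ideal.span {φ t}) :=
        φ.card_quotient_span_singleton_map Subtype.val_injective hindex hregular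
    _ = ∏ g, Nat.card (O ⧸ Ideal.span {φ t g}) := Pi.card_quotient_span_singleton _
    _ = ∏ g, Nat.card (O ⧸ Ideal.span {ϖ ^ m g}) := by simp only [hspan]

/-- Let `O` be a complete DVR with uniformizer `ϖ` and finite residue field,
`T ⊆ ∏_{g ∈ ι} O` a local complete `O`-subalgebra of full `O`-rank, and `J ⊆ T` an
ideal of finite index whose image under the `g`-th projection is `ϖ^{m g} O` (and the
image of `T` is all of `O`).  If `J` is principal, then
`#(T/J) = ∏_g #(O/ϖ^{m g})`. -/
theorem stmt7 (O : Type*) [CommRing O] [IsDomain O] [IsDiscreteValuationRing O]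
    [IsAdicComplete (IsLocalRing.maximalIdeal O) O]
    (ϖ : O) (hϖ : Irreducible ϖ) [Finite (O ⧸ Ideal.span {ϖ})]
    (ι : Type*) [Fintype ι] [Nonempty ι]
    (T : Subalgebra O (ι → O)) [IsLocalRing T]
    (hfull : ∀ x : ι → O, ∃ n : ℕ, ϖ ^ n • x ∈ T)
    (J : Ideal T) (hfin : Finite (T ⧸ J))
    (m : ι → ℕ) (hm : ∀ g, 0 < m g)
    (hTg : ∀ g : ι, Function.Surjective ((Pi.evalRingHom (fun _ : ι => O) g).comp T.val.toRingHom))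
    (hJg : ∀ g : ι,
      Ideal.map ((Pi.evalRingHom (fun _ : ι => O) g).comp T.val.toRingHom) J
        = Ideal.span {ϖ ^ m g})
    (hprinc : ∃ t : T, J = Ideal.span {t}) :
    Nat.card (T ⧸ J) = ∏ g : ι, Nat.card (O ⧸ Ideal.span {ϖ ^ m g}) :=
  stmt7_general O ϖ hϖ ι T hfull J m hJg hprinc
end

section
/- With the same setup: if T/J ≅ F (the residue field) and Σ_{g∈N} m_g > 1, then the ideal J of T is not principal. -/
/-!
As `T ⧸ J` is a field, `J` is the maximal ideal of the local ring `T`, so it contains `ϖ`.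
Projecting to a factor `g` gives `ϖ ∈ ϖ ^ m g • O`, i.e. `m g ≤ 1`; hence `∑ m g > 1` forces two
distinct factors `g ≠ h`, and then `ϖ ^ a • e_g` and `ϖ ^ b • e_h` are zero divisors in `T`.
On the other hand `T` is Noetherian, and if `J = (t)` then `t ∣ ϖ` is not nilpotent. By Krull's
intersection theorem every nonzero element of `T` is then `t ^ k` times a unit, so `T` would be a
domain.
-/

open IsLocalRing

theorem Subalgebra.isNoetherianRing {R A : Type*} [CommRing R] [CommRing A] [Algebra R A]
    [IsNoetherian R A] (T : Subalgebra R A) : IsNoetherianRing T :=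
  have : IsNoetherian R T := isNoetherian_submodule' (Subalgebra.toSubmodule T)
  isNoetherian_of_tower R this

namespace IsLocalRing

variable {R : Type*} [CommRing R] [IsLocalRing R] [IsNoetherianRing R] {t : R}

theorem exists_eq_pow_mul_of_maximalIdeal_eq_span (ht : maximalIdeal R = Ideal.span {t})
    {z : R} (hz : z ≠ 0) : ∃ (k : ℕ) (u : R), IsUnit u ∧ z = t ^ k * u := by
  have hfin : FiniteMultiplicity t z := by
    by_contra hinf
    refine hz (Ideal.mem_bot.mp ?_)
    rw [← Ideal.iInf_pow_eq_bot_of_isLocalRing _ (maximalIdeal.isMaximal R).ne_top,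
      Ideal.mem_iInf]
    intro n
    rw [ht, Ideal.span_singleton_pow, Ideal.mem_span_singleton]
    exact (FiniteMultiplicity.not_iff_forall.mp hinf) n
  obtain ⟨u, hz, htu⟩ := hfin.exists_eq_pow_mul_and_not_dvd
  refine ⟨_, u, ?_, hz⟩
  by_contra hu
  exact htu (Ideal.mem_span_singleton.mp (ht ▸ (mem_maximalIdeal u).mpr hu))

theorem isDomain_of_maximalIdeal_eq_span (ht : maximalIdeal R = Ideal.span {t})
    (hnil : ¬ IsNilpotent t) : IsDomain R := by
  have : NoZeroDivisors R := by
    refine ⟨fun {x y} hxy => ?_⟩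
    by_contra! hne
    obtain ⟨a, u, hu, rfl⟩ := exists_eq_pow_mul_of_maximalIdeal_eq_span ht hne.1
    obtain ⟨b, v, hv, rfl⟩ := exists_eq_pow_mul_of_maximalIdeal_eq_span ht hne.2
    have : t ^ (a + b) * (u * v) = 0 := by rw [← hxy]; ring
    exact hnil ⟨a + b, (hu.mul hv).mul_left_eq_zero.mp this⟩
  exact NoZeroDivisors.to_isDomain R

end IsLocalRing

namespace Subalgebra

variable {O ι : Type*} [CommRing O] (T : Subalgebra O (ι → O))

theorem algebraMap_mem_maximalIdeal [IsLocalRing T] (g : ι) {r : O} (hr : ¬IsUnit r) :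
    algebraMap O T r ∈ maximalIdeal T :=
  fun hu => hr (hu.map ((Pi.evalRingHom (fun _ : ι => O) g).comp T.val.toRingHom))

theorem not_isDomain_of_pow_smul_mem {ϖ : O} (hϖ : ¬IsNilpotent ϖ)
    (hfull : ∀ x : ι → O, ∃ n : ℕ, ϖ ^ n • x ∈ T) {g h : ι} (hgh : g ≠ h) : ¬IsDomain T := by
  classical
  intro hT
  obtain ⟨a, ha⟩ := hfull (Pi.single g 1)
  obtain ⟨b, hb⟩ := hfull (Pi.single h 1)
  have hne : ∀ {n : ℕ} {i : ι} (hx : ϖ ^ n • Pi.single i 1 ∈ T), (⟨_, hx⟩ : T) ≠ 0 :=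
    fun {n i} _ h0 => hϖ ⟨n, by simpa using congrFun (congrArg Subtype.val h0) i⟩
  refine mul_ne_zero (hne ha) (hne hb) (Subtype.ext (funext fun i => ?_))
  rcases eq_or_ne i g with rfl | hig
  · simp [Pi.single_eq_of_ne hgh]
  · simp [Pi.single_eq_of_ne hig]

end Subalgebra

theorem stmt9_general (O : Type*) [CommRing O] [IsDomain O] [IsDiscreteValuationRing O]
    (ϖ : O) (hϖ : Irreducible ϖ)
    (ι : Type*) [Fintype ι]
    (T : Subalgebra O (ι → O)) [IsLocalRing T]
    (hfull : ∀ x : ι → O, ∃ n : ℕ, ϖ ^ n • x ∈ T)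
    (J : Ideal T)
    (m : ι → ℕ)
    (hJg : ∀ g : ι,
      Ideal.map ((Pi.evalRingHom (fun _ : ι => O) g).comp T.val.toRingHom) J
        = Ideal.span {ϖ ^ m g})
    (hres : Nonempty ((T ⧸ J) ≃+* (O ⧸ Ideal.span {ϖ})))
    (hsum : 1 < ∑ g : ι, m g) :
    ¬ ∃ t : T, J = Ideal.span {t} := by
  rintro ⟨t, ht⟩
  have hJ : J = maximalIdeal T := eq_maximalIdeal <| Ideal.Quotient.maximal_of_isField _ <|
    hres.some.toMulEquiv.isField <| (Ideal.Quotient.maximal_ideal_iff_isField_quotient _).mp <|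
      PrincipalIdealRing.isMaximal_of_irreducible hϖ
  have hϖJ : ∀ g, algebraMap O T ϖ ∈ J :=
    fun g => hJ ▸ T.algebraMap_mem_maximalIdeal g hϖ.not_isUnit
  have hm : ∀ g, m g ≤ 1 := fun g => by
    have hϖg : ϖ ∈ J.map ((Pi.evalRingHom (fun _ : ι => O) g).comp T.val.toRingHom) :=
      Ideal.mem_map_of_mem _ (hϖJ g)
    rw [hJg, Ideal.mem_span_singleton] at hϖg
    exact (pow_dvd_pow_iff hϖ.ne_zero hϖ.not_isUnit).mp (by rwa [pow_one])
  have : Nontrivial ι := Fintype.one_lt_card_iff_nontrivial.mp <|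
    hsum.trans_le (by simpa using Finset.sum_le_card_nsmul Finset.univ m 1 fun g _ => hm g)
  obtain ⟨g, h, hgh⟩ := exists_pair_ne ι
  have hϖnil : ¬IsNilpotent ϖ := fun hn => hϖ.ne_zero hn.eq_zero
  have htϖ : t ∣ algebraMap O T ϖ := Ideal.mem_span_singleton.mp (ht ▸ hϖJ g)
  have htnil : ¬IsNilpotent t := fun hnil => by
    obtain ⟨c, hc⟩ := htϖ
    exact hϖnil <| (hc ▸ (Commute.all t c).isNilpotent_mul_right hnil).map
      ((Pi.evalRingHom (fun _ : ι => O) g).comp T.val.toRingHom)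
  have := T.isNoetherianRing
  exact T.not_isDomain_of_pow_smul_mem hϖnil hfull hgh
    (isDomain_of_maximalIdeal_eq_span (hJ ▸ ht) htnil)

/-- Same setup: `O` a complete DVR with uniformizer `ϖ` and finite residue field `F`,
`T ⊆ ∏_{g ∈ ι} O` a full-rank local complete `O`-subalgebra, and `J ⊆ T` an ideal with
residue images `ϖ^{m g} O` (`m g ≥ 1`).  If `T/J ≅ F` and `Σ_g m g > 1`, then the
ideal `J` of `T` is not principal. -/
theorem stmt9 (O : Type*) [CommRing O] [IsDomain O] [IsDiscreteValuationRing O]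
    [IsAdicComplete (IsLocalRing.maximalIdeal O) O]
    (ϖ : O) (hϖ : Irreducible ϖ) [Finite (O ⧸ Ideal.span {ϖ})]
    (ι : Type*) [Fintype ι] [Nonempty ι]
    (T : Subalgebra O (ι → O)) [IsLocalRing T]
    (hfull : ∀ x : ι → O, ∃ n : ℕ, ϖ ^ n • x ∈ T)
    (J : Ideal T)
    (m : ι → ℕ) (hm : ∀ g, 0 < m g)
    (hTg : ∀ g : ι, Function.Surjective ((Pi.evalRingHom (fun _ : ι => O) g).comp T.val.toRingHom))
    (hJg : ∀ g : ι,
      Ideal.map ((Pi.evalRingHom (fun _ : ι => O) g).comp T.val.toRingHom) J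
        = Ideal.span {ϖ ^ m g})
    (hres : Nonempty ((T ⧸ J) ≃+* (O ⧸ Ideal.span {ϖ})))
    (hsum : 1 < ∑ g : ι, m g) :
    ¬ ∃ t : T, J = Ideal.span {t} :=
  stmt9_general O ϖ hϖ ι T hfull J m hJg hres hsum
end

section
/- Let A be a commutative ring and M, N finitely generated free A-modules equipped with decreasing filtrations by direct summands M^i, N^i (with M^i = M for i << 0 and M^i = 0 for i >> 0, same for N). Define a filtration on Hom_A(M,N) by Hom_A(M,N)^i = {f : f(M^j) ⊆ N^{j+i} for all j}. Then the canonical A-module map ψ : M^∨ ⊗_A N -> Hom_A(M,N) (where M^∨ = Hom_A(M,A) carries the dual filtration (M^∨)^i = {f : f(M^k) ⊆ A^{i+k}} with A^j = A for j ≤ 0 and A^j = 0 for j > 0) satisfies ψ((M^∨ ⊗ N)^n) = Hom_A(M,N)^n for all n, where (M^∨ ⊗ N)^n = Σ_{i+j=n} (M^∨)^i ⊗_A N^j. -/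
/-!
The inclusion `ψ((M^∨ ⊗ N)^n) ⊆ Hom(M,N)^n` holds term by term. Conversely, using the splittings
`M = M^j ⊕ C_j`, a map `f ∈ Hom(M,N)^n` is a sum of maps `h` each of which kills some `M^{j+1}`
and takes values in `N^{j+n}`. For such `h` and the projection `e` of `M` along `M^{j+1}` we have
`h = h ∘ e`; since `M` is finite free, `h = ψ(∑ φ_α ⊗ w_α)` with `w_α ∈ N^{j+n}`, hence
`h = ψ(∑ (φ_α ∘ e) ⊗ w_α)`, and every `φ_α ∘ e` kills `M^{j+1}`, i.e. lies in `(M^∨)^{-j}`.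
-/

open TensorProduct

section

variable {A : Type*} [CommRing A] {M N : Type*} [AddCommGroup M] [Module A M]
  [AddCommGroup N] [Module A N] {FM : ℤ → Submodule A M} {FN : ℤ → Submodule A N}

variable (FM FN) in
def homFiltration (n : ℤ) : Submodule A (M →ₗ[A] N) where
  carrier := {f | ∀ j : ℤ, ∀ m ∈ FM j, f m ∈ FN (j + n)}
  add_mem' hf hg j m hm := add_mem (hf j m hm) (hg j m hm)
  zero_mem' _ _ _ := zero_mem _
  smul_mem' c _ hf j m hm := Submodule.smul_mem _ c (hf j m hm)

variable (FM) in
/-- `f(M^k) ⊆ A^{i+k}` with `A^j = A` for `j ≤ 0` and `A^j = 0` for `j > 0`. -/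
def dualFiltration (i : ℤ) : Submodule A (Module.Dual A M) where
  carrier := {f | ∀ k : ℤ, ∀ m ∈ FM k, 0 < i + k → f m = 0}
  add_mem' hf hg k m hm hk := by simp [hf k m hm hk, hg k m hm hk]
  zero_mem' _ _ _ _ := rfl
  smul_mem' c _ hf k m hm hk := by simp [hf k m hm hk]

variable (FM FN) in
def dualTensorFiltration (n : ℤ) : Submodule A (Module.Dual A M ⊗[A] N) :=
  ⨆ i : ℤ, Submodule.span A
    {x | ∃ f ∈ dualFiltration FM i, ∃ w ∈ FN (n - i), x = f ⊗ₜ[A] w}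

theorem dualTensorFiltration_le_comap_homFiltration (hFN : Antitone FN) (n : ℤ) :
    dualTensorFiltration FM FN n ≤ (homFiltration FM FN n).comap (dualTensorHom A M N) := by
  refine iSup_le fun i ↦ Submodule.span_le.mpr ?_
  rintro _ ⟨f, hf, w, hw, rfl⟩ j m hm
  rw [dualTensorHom_apply]
  by_cases hij : 0 < i + j
  · simp [hf j m hm hij]
  · exact Submodule.smul_mem _ _ (hFN (by omega) hw)

theorem dualTensorHom_map_dualMap_subtype (e : M →ₗ[A] M) (P : Submodule A N)
    (x : Module.Dual A M ⊗[A] P) :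
    dualTensorHom A M N (map e.dualMap P.subtype x) =
      P.subtype ∘ₗ dualTensorHom A M P x ∘ₗ e := by
  induction x using TensorProduct.induction_on with
  | zero => ext; simp
  | tmul f w => ext; simp
  | add x y hx hy => simp only [map_add, hx, hy, LinearMap.add_comp, LinearMap.comp_add]

theorem mem_map_range_map_dualMap_subtype [Module.Free A M] [Module.Finite A M]
    {e : M →ₗ[A] M} {P : Submodule A N} {h : M →ₗ[A] N} (he : h ∘ₗ e = h)
    (hP : ∀ m, h m ∈ P) :
    h ∈ (LinearMap.range (map e.dualMap P.subtype)).map (dualTensorHom A M N) := by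
  obtain ⟨x, hx⟩ := (dualTensorHom_bijective (R := A) (M := M) (N := P)).2 (h.codRestrict P hP)
  refine ⟨_, LinearMap.mem_range_self _ x, ?_⟩
  rw [dualTensorHom_map_dualMap_subtype, hx, ← LinearMap.comp_assoc,
    LinearMap.subtype_comp_codRestrict, he]

theorem mem_map_dualTensorFiltration_of_forall_eq_zero [Module.Free A M] [Module.Finite A M]
    (hFM : Antitone FM) {n j : ℤ} (hFMc : ∃ C, IsCompl (FM (j + 1)) C) {h : M →ₗ[A] N}
    (hker : ∀ m ∈ FM (j + 1), h m = 0) (him : ∀ m, h m ∈ FN (j + n)) :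
    h ∈ (dualTensorFiltration FM FN n).map (dualTensorHom A M N) := by
  obtain ⟨C, hC⟩ := hFMc
  set e := C.projection (FM (j + 1)) hC.symm
  have he : h ∘ₗ e = h := LinearMap.ext fun m ↦ by
    have := hker _ (Submodule.sub_projection_mem hC.symm m)
    rw [map_sub, sub_eq_zero] at this
    exact this.symm
  refine Submodule.map_mono ?_ (mem_map_range_map_dualMap_subtype he him)
  rw [range_map_eq_span_tmul, Submodule.span_le]
  rintro _ ⟨f, w, rfl⟩
  refine Submodule.mem_iSup_of_mem (-j) (Submodule.subset_span ⟨e.dualMap f, ?_, w, ?_, rfl⟩)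
  · intro k m hm hk
    simp [e, Submodule.projection_apply_of_mem_right hC.symm (hFM (by omega : j + 1 ≤ k) hm)]
  · rw [sub_neg_eq_add, add_comm]
    exact w.2

theorem comp_projection_mem_homFiltration (hFM : Antitone FM) (hFN : Antitone FN) {j n : ℤ}
    {C : Submodule A M} (hC : IsCompl (FM j) C) {f : M →ₗ[A] N}
    (hf : f ∈ homFiltration FM FN n) :
    f ∘ₗ (FM j).projection C hC ∈ homFiltration FM FN n := by
  intro j' m hm
  by_cases hj : j' ≤ j
  · exact hFN (by omega) (hf j _ (Submodule.projection_apply_mem hC m))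
  · rw [LinearMap.comp_apply, Submodule.projection_apply_of_mem_left hC (hFM (by omega) hm)]
    exact hf j' m hm

theorem homFiltration_le_map_dualTensorFiltration [Module.Free A M] [Module.Finite A M]
    (hFM : Antitone FM) (hFN : Antitone FN)
    (hFMc : ∀ i, ∃ C, IsCompl (FM i) C) (hFMex : ∃ k : ℤ, ∀ i ≤ k, FM i = ⊤)
    (hFMsep : ∃ l : ℤ, ∀ i, l ≤ i → FM i = ⊥) (n : ℤ) :
    homFiltration FM FN n ≤ (dualTensorFiltration FM FN n).map (dualTensorHom A M N) := by
  obtain ⟨k, hk⟩ := hFMex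
  obtain ⟨l, hl⟩ := hFMsep
  have mem_of_vanishing : ∀ j ≥ k, ∀ f ∈ homFiltration FM FN n, (∀ m ∈ FM j, f m = 0) →
      f ∈ (dualTensorFiltration FM FN n).map (dualTensorHom A M N) := by
    intro j hj
    induction j, hj using Int.leInduction with
    | base =>
      intro f _ hf
      obtain rfl : f = 0 := LinearMap.ext fun m ↦ hf m (by simp [hk k le_rfl])
      exact zero_mem _
    | succ j hj ih =>
      intro f hf hvan
      obtain ⟨C, hC⟩ := hFMc j
      have hfix : ∀ m ∈ FM j, (FM j).projection C hC m = m :=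
        fun m hm ↦ Submodule.projection_apply_of_mem_left hC hm
      have hfp := mem_map_dualTensorFiltration_of_forall_eq_zero hFM (hFMc (j + 1))
        (h := f ∘ₗ (FM j).projection C hC)
        (fun m hm ↦ by simpa [hfix m (hFM (by omega) hm)] using hvan m hm)
        (fun m ↦ hf j _ (Submodule.projection_apply_mem hC m))
      have hrest := ih (f - f ∘ₗ (FM j).projection C hC)
        (sub_mem hf (comp_projection_mem_homFiltration hFM hFN hC hf))
        (fun m hm ↦ by simp [hfix m hm])
      simpa using add_mem hfp hrest
  intro f hf
  refine mem_of_vanishing (max k l) (le_max_left _ _) f hf fun m hm ↦ ?_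
  rw [hl _ (le_max_right _ _), Submodule.mem_bot] at hm
  simp [hm]

theorem map_dualTensorFiltration_eq_homFiltration [Module.Free A M] [Module.Finite A M]
    (hFM : Antitone FM) (hFN : Antitone FN)
    (hFMc : ∀ i, ∃ C, IsCompl (FM i) C) (hFMex : ∃ k : ℤ, ∀ i ≤ k, FM i = ⊤)
    (hFMsep : ∃ l : ℤ, ∀ i, l ≤ i → FM i = ⊥) (n : ℤ) :
    (dualTensorFiltration FM FN n).map (dualTensorHom A M N) = homFiltration FM FN n :=
  le_antisymm
    (Submodule.map_le_iff_le_comap.mpr (dualTensorFiltration_le_comap_homFiltration hFN n))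
    (homFiltration_le_map_dualTensorFiltration hFM hFN hFMc hFMex hFMsep n)

end

theorem stmt16_general (A : Type*) [CommRing A]
    (M N : Type*) [AddCommGroup M] [Module A M] [AddCommGroup N] [Module A N]
    [Module.Free A M] [Module.Finite A M]
    (FM : ℤ → Submodule A M) (FN : ℤ → Submodule A N)
    (hFM : Antitone FM) (hFN : Antitone FN)
    (hFMc : ∀ i, ∃ C, IsCompl (FM i) C)
    (hFMex : ∃ k : ℤ, ∀ i ≤ k, FM i = ⊤) (hFMsep : ∃ l : ℤ, ∀ i, l ≤ i → FM i = ⊥) :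
    ∀ n : ℤ,
      (Submodule.map (dualTensorHom A M N)
        (⨆ i : ℤ, Submodule.span A
          {x : Module.Dual A M ⊗[A] N | ∃ f : Module.Dual A M,
            (∀ (k : ℤ), ∀ m ∈ FM k, 0 < i + k → f m = 0)
              ∧ ∃ w ∈ FN (n - i), x = f ⊗ₜ[A] w}) : Set (M →ₗ[A] N))
      = {f : M →ₗ[A] N | ∀ j : ℤ, ∀ m ∈ FM j, f m ∈ FN (j + n)} :=
  fun n ↦ congrArg SetLike.coe
    (map_dualTensorFiltration_eq_homFiltration hFM hFN hFMc hFMex hFMsep n)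

/-- Let `M, N` be finitely generated free `A`-modules with decreasing exhaustive and
separated filtrations by direct summands.  Equip `Hom_A(M,N)` with the filtration
`Hom_A(M,N)^n = {f | f(M^j) ⊆ N^{j+n}}`, `M^∨ = Hom_A(M,A)` with the dual filtration
`(M^∨)^i = {f | f(M^k) ⊆ A^{i+k}}` (where `A^j = A` for `j ≤ 0` and `A^j = 0` for
`j > 0`), and `M^∨ ⊗_A N` with the tensor product filtration
`(M^∨ ⊗ N)^n = Σ_{i+j=n} (M^∨)^i ⊗ N^j`.  Then the canonical map
`ψ : M^∨ ⊗_A N → Hom_A(M,N)` satisfies `ψ((M^∨ ⊗ N)^n) = Hom_A(M,N)^n` for all `n`. -/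
theorem stmt16 (A : Type*) [CommRing A]
    (M N : Type*) [AddCommGroup M] [Module A M] [AddCommGroup N] [Module A N]
    [Module.Free A M] [Module.Finite A M] [Module.Free A N] [Module.Finite A N]
    (FM : ℤ → Submodule A M) (FN : ℤ → Submodule A N)
    (hFM : Antitone FM) (hFN : Antitone FN)
    (hFMc : ∀ i, ∃ C, IsCompl (FM i) C) (hFNc : ∀ i, ∃ C, IsCompl (FN i) C)
    (hFMex : ∃ k : ℤ, ∀ i ≤ k, FM i = ⊤) (hFMsep : ∃ l : ℤ, ∀ i, l ≤ i → FM i = ⊥)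
    (hFNex : ∃ k : ℤ, ∀ i ≤ k, FN i = ⊤) (hFNsep : ∃ l : ℤ, ∀ i, l ≤ i → FN i = ⊥) :
    ∀ n : ℤ,
      (Submodule.map (dualTensorHom A M N)
        (⨆ i : ℤ, Submodule.span A
          {x : Module.Dual A M ⊗[A] N | ∃ f : Module.Dual A M,
            (∀ (k : ℤ), ∀ m ∈ FM k, 0 < i + k → f m = 0)
              ∧ ∃ w ∈ FN (n - i), x = f ⊗ₜ[A] w}) : Set (M →ₗ[A] N))
      = {f : M →ₗ[A] N | ∀ j : ℤ, ∀ m ∈ FM j, f m ∈ FN (j + n)} :=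
  stmt16_general A M N FM FN hFM hFN hFMc hFMex hFMsep
end

section
/- Let G be a group, F a field of characteristic ≠ 2, and ρ̄ : G -> GL_2(F) an absolutely irreducible representation. Suppose the 3-dimensional representation ad^0 ρ̄ (trace-zero conjugation action) has a G-stable line on which G acts by a character ψ. Then ρ̄ ⊗ ψ ≅ ρ̄, and taking determinants yields ψ^2 = 1; in particular if ψ has odd order then ψ is trivial and ad^0 ρ̄ has nonzero G-invariants, contradicting Schur's lemma when ρ̄ is absolutely irreducible (since then H^0(G, ad ρ̄) is 1-dimensional, spanned by scalars). -/
open Matrix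

/-- Let `F` be a field of characteristic `≠ 2` and `ρ : G → GL₂(F)` absolutely
irreducible (irreducible with scalar endomorphisms).  Suppose `ad⁰ρ` has a `G`-stable
line spanned by `0 ≠ X` with trace `0`, on which `G` acts by a character `ψ`, i.e.
`ρ(g) X ρ(g)⁻¹ = ψ(g) X`.  Then `ρ ⊗ ψ ≅ ρ`, taking determinants gives `ψ² = 1`, and
`ψ` cannot have odd order (else `ψ` is trivial and `X` is a nonscalar `G`-invariant
element of `ad ρ`, contradicting Schur's lemma). -/
theorem stmt19 (F : Type*) [Field F] (h2 : (2 : F) ≠ 0)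
    (G : Type*) [Group G] (ρ : G →* (Matrix (Fin 2) (Fin 2) F)ˣ)
    (hirr : ∀ S : Submodule F (Fin 2 → F),
      (∀ g : G, ∀ v ∈ S, ((ρ g : Matrix (Fin 2) (Fin 2) F)).mulVec v ∈ S) → S = ⊥ ∨ S = ⊤)
    (hEnd : ∀ B : Matrix (Fin 2) (Fin 2) F,
      (∀ g : G, B * (ρ g : Matrix (Fin 2) (Fin 2) F) = (ρ g : Matrix (Fin 2) (Fin 2) F) * B)
        → ∃ α : F, B = α • (1 : Matrix (Fin 2) (Fin 2) F))
    (X : Matrix (Fin 2) (Fin 2) F) (hX : X ≠ 0) (htr : X.trace = 0)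
    (ψ : G →* Fˣ)
    (hstab : ∀ g : G,
      (ρ g : Matrix (Fin 2) (Fin 2) F) * X * ((ρ g)⁻¹ : Matrix (Fin 2) (Fin 2) F)
        = (ψ g : F) • X) :
    (∃ P : (Matrix (Fin 2) (Fin 2) F)ˣ, ∀ g : G,
        (P : Matrix (Fin 2) (Fin 2) F) * ((ψ g : F) • (ρ g : Matrix (Fin 2) (Fin 2) F))
          = (ρ g : Matrix (Fin 2) (Fin 2) F) * P)
      ∧ ψ ^ 2 = 1
      ∧ ¬ Odd (orderOf ψ) := by
  -- rewrite the stability condition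
  have hstab' : ∀ g : G, (ρ g : Matrix (Fin 2) (Fin 2) F) * X
      = (ψ g : F) • (X * (ρ g : Matrix (Fin 2) (Fin 2) F)) := by
    intro g
    have h := congrArg (· * (ρ g : Matrix (Fin 2) (Fin 2) F)) (hstab g)
    simp only [smul_mul_assoc] at h
    have hinv : ((ρ g)⁻¹ : Matrix (Fin 2) (Fin 2) F) * (ρ g : Matrix (Fin 2) (Fin 2) F) = 1 :=
      Matrix.nonsing_inv_mul _ ((Matrix.isUnit_iff_isUnit_det _).mp (ρ g).isUnit)
    rw [mul_assoc, hinv, mul_one] at h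
    exact h
  -- X is invertible
  have hXunit : IsUnit X := by
    rw [← Matrix.mulVec_surjective_iff_isUnit]
    set S : Submodule F (Fin 2 → F) := LinearMap.range X.mulVecLin with hS
    have hstable : ∀ g : G, ∀ v ∈ S, ((ρ g : Matrix (Fin 2) (Fin 2) F)).mulVec v ∈ S := by
      intro g v hv
      obtain ⟨w, rfl⟩ := hv
      refine ⟨(ψ g : F) • ((ρ g : Matrix (Fin 2) (Fin 2) F)).mulVec w, ?_⟩
      simp only [Matrix.mulVecLin_apply] at *
      rw [Matrix.mulVec_mulVec, hstab' g, Matrix.smul_mulVec,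
        Matrix.mulVec_smul, Matrix.mulVec_mulVec]
    rcases hirr S hstable with hbot | htop
    · exfalso
      apply hX
      ext i j
      have : X.mulVec (Pi.single j 1) = 0 := by
        have : X.mulVecLin (Pi.single j 1) ∈ S := ⟨_, rfl⟩
        rw [hbot] at this
        simpa using this
      have := congrFun this i
      simpa [Matrix.mulVec_single] using this
    · intro v
      have : v ∈ S := htop ▸ Submodule.mem_top
      obtain ⟨w, hw⟩ := this
      exact ⟨w, hw⟩
  have hdX : X.det ≠ 0 := by
    intro h
    exact (Matrix.isUnit_iff_isUnit_det X).mp hXunit |>.ne_zero h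
  -- ψ g ^ 2 = 1
  have hpsisq : ∀ g : G, (ψ g : F) ^ 2 = 1 := by
    intro g
    have h := congrArg Matrix.det (hstab' g)
    rw [Matrix.det_mul, Matrix.det_smul, Matrix.det_mul] at h
    have hdρ : ((ρ g : Matrix (Fin 2) (Fin 2) F)).det ≠ 0 := by
      have := (Matrix.isUnit_iff_isUnit_det _).mp (ρ g).isUnit
      exact this.ne_zero
    have hcard : (ψ g : F) ^ (Fintype.card (Fin 2)) = (ψ g : F) ^ 2 := by norm_num
    rw [hcard] at h
    have : (ψ g : F) ^ 2 * (X.det * ((ρ g : Matrix (Fin 2) (Fin 2) F)).det)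
        = 1 * (X.det * ((ρ g : Matrix (Fin 2) (Fin 2) F)).det) := by
      rw [one_mul, ← h]; ring
    exact mul_right_cancel₀ (mul_ne_zero hdX hdρ) this
  have hpsi2 : ψ ^ 2 = 1 := by
    ext g
    have : (ψ g) ^ 2 = 1 := Units.ext (by
      rw [Units.val_pow_eq_pow_val, Units.val_one]; exact hpsisq g)
    simpa [pow_two] using hpsisq g
  refine ⟨⟨hXunit.unit, fun g => ?_⟩, hpsi2, ?_⟩
  · rw [IsUnit.unit_spec, Matrix.mul_smul, ← hstab' g]
  · intro hodd
    have hdvd : orderOf ψ ∣ 2 := orderOf_dvd_of_pow_eq_one hpsi2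
    rcases (Nat.dvd_prime Nat.prime_two).mp hdvd with h | h
    · -- orderOf ψ = 1 so ψ = 1
      have hψ1 : ψ = 1 := orderOf_eq_one_iff.mp h
      have hcomm : ∀ g : G, X * (ρ g : Matrix (Fin 2) (Fin 2) F)
          = (ρ g : Matrix (Fin 2) (Fin 2) F) * X := by
        intro g
        have := hstab' g
        rw [hψ1] at this
        simp at this
        exact this.symm
      obtain ⟨α, hα⟩ := hEnd X hcomm
      rw [hα] at htr
      rw [Matrix.trace_smul, Matrix.trace_one] at htr
      simp only [Fintype.card_fin, smul_eq_mul] at htr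
      have : α = 0 := by
        rcases mul_eq_zero.mp (by rw [mul_comm] at htr; exact htr) with h | h
        · exact absurd h h2
        · exact h
      apply hX
      rw [hα, this, zero_smul]
    · -- orderOf ψ = 2 contradicts odd
      rw [h] at hodd
      exact (Nat.not_odd_iff_even.mpr (by norm_num)) hodd
end
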